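/- Fiberwise controllability via transported directions (linear model): let A ∈ ℝ^{n×n}, x_0 ∈ ℝ^n, and X_1, …, X_m : ℝ^n → ℝ^n smooth. Define S_T := span{ e^{−tA} X_i(e^{tA} x_0) : t ∈ [0,T], i = 1, …, m }. Then the reachable set at time T of the system v(T) = e^{TA} v_0 + Σ_i ∫_0^T u_i(t) e^{(T−t)A} X_i(e^{tA} x_0) dt over L^1 controls equals e^{TA} v_0 + e^{TA}(S_T); in particular it is all of ℝ^n if and only if S_T = ℝ^n. -/

import Mathlib

open MeasureTheory NormedSpace

attribute [local instance] Matrix.linftyOpNormedRing Matrix.linftyOpNormedAlgebra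

/-- An interval integral of a function with values in a submodule of `ℝⁿ`
lies in the submodule. -/
lemma aux_integral_mem {n : ℕ} (S : Submodule ℝ (Fin n → ℝ)) {a b : ℝ} (hab : a ≤ b)
    {F : ℝ → (Fin n → ℝ)} (hFi : IntervalIntegrable F MeasureTheory.volume a b)
    (hF : ∀ t ∈ Set.Icc a b, F t ∈ S) :
    (∫ t in a..b, F t) ∈ S := by
  obtain ⟨q, hq⟩ := Submodule.exists_isCompl S
  let π : (Fin n → ℝ) →L[ℝ] q :=
    LinearMap.toContinuousLinearMap (q.projectionOnto S hq.symm)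
  have hπS : ∀ x ∈ S, π x = 0 := by
    intro x hx
    show (q.projectionOnto S hq.symm) x = 0
    exact (Submodule.projectionOnto_apply_eq_zero_iff hq.symm).mpr hx
  have key : π (∫ t in a..b, F t) = 0 := by
    rw [← π.intervalIntegral_comp_comm hFi]
    have : ∀ t ∈ Set.uIcc a b, π (F t) = (0 : ℝ → q) t := by
      intro t ht
      rw [Set.uIcc_of_le hab] at ht
      exact hπS _ (hF t ht)
    rw [intervalIntegral.integral_congr this]
    simp
  have : (∫ t in a..b, F t) ∈ LinearMap.ker (q.projectionOnto S hq.symm) :=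
    LinearMap.mem_ker.mpr key
  rwa [Submodule.ker_projectionOnto] at this

/-- Integrating an indicator control. -/
lemma aux_integral_indicator_smul {n : ℕ} {a b T : ℝ} (h0 : 0 ≤ a) (hab : a ≤ b) (hbT : b ≤ T)
    (g : ℝ → Fin n → ℝ) (r : ℝ) :
    (∫ t in (0:ℝ)..T, (Set.indicator (Set.Ioc a b) (fun _ => r) t) • g t)
      = r • ∫ t in a..b, g t := by
  have h0T : (0:ℝ) ≤ T := le_trans h0 (hab.trans hbT)
  have hsub : Set.Ioc a b ⊆ Set.Ioc 0 T := Set.Ioc_subset_Ioc h0 hbT |>.trans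
    (Set.Ioc_subset_Ioc_left (le_refl 0))
  rw [intervalIntegral.integral_of_le h0T, intervalIntegral.integral_of_le hab]
  have hfun : ∀ t, (Set.indicator (Set.Ioc a b) (fun _ => r) t) • g t
      = Set.indicator (Set.Ioc a b) (fun t => r • g t) t := by
    intro t
    by_cases h : t ∈ Set.Ioc a b <;> simp [h]
  simp_rw [hfun]
  rw [MeasureTheory.integral_indicator measurableSet_Ioc,
    MeasureTheory.integral_smul]
  congr 1
  rw [Measure.restrict_restrict measurableSet_Ioc, Set.inter_eq_left.mpr hsub]

/-- Fiberwise controllability via transported directions,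
linear model: let `A ∈ ℝ^{n×n}`, `x₀ ∈ ℝⁿ`, `X₁, …, X_m : ℝⁿ → ℝⁿ` smooth, and
`T > 0`.  With `S_T := span{e^{-tA} Xᵢ(e^{tA} x₀) : t ∈ [0,T], i}`, the
reachable set at time `T` of the system, i.e. the set of all
`e^{TA} v₀ + ∑ᵢ ∫₀ᵀ uᵢ(t) e^{(T-t)A} Xᵢ(e^{tA} x₀) dt` over `L¹` controls `u`,
equals `e^{TA} v₀ + e^{TA}(S_T)`; in particular it is all of `ℝⁿ` if and only
if `S_T = ℝⁿ`. -/
theorem reachable_set_via_transported_directions {n m : ℕ}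
    (A : Matrix (Fin n) (Fin n) ℝ)
    (X : Fin m → (Fin n → ℝ) → (Fin n → ℝ)) (hX : ∀ i, ContDiff ℝ (⊤ : ℕ∞) (X i))
    (x0 v0 : Fin n → ℝ) (T : ℝ) (hT : 0 < T) :
    let ST : Submodule ℝ (Fin n → ℝ) := Submodule.span ℝ
      {w : Fin n → ℝ | ∃ i, ∃ t ∈ Set.Icc (0:ℝ) T,
        w = (exp (-(t • A))).mulVec (X i ((exp (t • A)).mulVec x0))}
    let R : Set (Fin n → ℝ) := {w : Fin n → ℝ | ∃ u : Fin m → ℝ → ℝ,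
        (∀ i, IntegrableOn (u i) (Set.Icc 0 T)) ∧
        w = (exp (T • A)).mulVec v0
          + ∑ i, ∫ t in (0:ℝ)..T,
              u i t • (exp ((T - t) • A)).mulVec (X i ((exp (t • A)).mulVec x0))}
    R = (fun z => (exp (T • A)).mulVec v0 + (exp (T • A)).mulVec z) '' (ST : Set (Fin n → ℝ))
      ∧ (R = Set.univ ↔ ST = ⊤) := by
  intro ST R
  have hT0 : (0:ℝ) ≤ T := hT.le
  set B : Matrix (Fin n) (Fin n) ℝ := exp (T • A) with hBdef
  set g : Fin m → ℝ → (Fin n → ℝ) :=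
    fun i t => (exp ((T - t) • A)).mulVec (X i ((exp (t • A)).mulVec x0)) with hgdef
  set f : Fin m → ℝ → (Fin n → ℝ) :=
    fun i t => (exp (-(t • A))).mulVec (X i ((exp (t • A)).mulVec x0)) with hfdef
  -- the matrix exponential splits
  have hsplit : ∀ t : ℝ, exp ((T - t) • A) = B * exp (-(t • A)) := by
    intro t
    have hc : Commute (T • A) (-(t • A)) :=
      (((Commute.refl A).smul_left T).smul_right t).neg_right
    have h1 : (T - t) • A = T • A + -(t • A) := by
      rw [sub_smul, sub_eq_add_neg]
    rw [h1, Matrix.exp_add_of_commute _ _ hc]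
  have hgf : ∀ i t, g i t = B.mulVec (f i t) := by
    intro i t
    rw [hgdef, hfdef]
    simp only [hsplit t, ← Matrix.mulVec_mulVec]
  -- B is invertible with inverse exp (-(T•A))
  have hBinv : exp (-(T • A)) * B = 1 := by
    have hc : Commute (-(T • A)) (T • A) := ((Commute.refl (T • A)).neg_left)
    rw [hBdef, ← Matrix.exp_add_of_commute _ _ hc, neg_add_cancel, exp_zero]
  have hBinv' : B * exp (-(T • A)) = 1 := by
    have hc : Commute (T • A) (-(T • A)) := ((Commute.refl (T • A)).neg_right)
    rw [hBdef, ← Matrix.exp_add_of_commute _ _ hc, add_neg_cancel, exp_zero]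
  -- continuity of g
  have hexpc : Continuous fun t : ℝ => exp (t • A) :=
    exp_continuous.comp (continuous_id.smul continuous_const)
  have hexpc' : Continuous fun t : ℝ => exp ((T - t) • A) :=
    exp_continuous.comp ((continuous_const.sub continuous_id).smul continuous_const)
  have hgc : ∀ i, Continuous (g i) := by
    intro i
    exact hexpc'.matrix_mulVec
      (((hX i).continuous).comp (hexpc.matrix_mulVec continuous_const))
  -- integrability of u • g
  have hint : ∀ (i : Fin m) (u : ℝ → ℝ), IntegrableOn u (Set.Icc 0 T) →
      IntervalIntegrable (fun t => u t • g i t) MeasureTheory.volume 0 T := by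
    intro i u hu
    rw [intervalIntegrable_iff_integrableOn_Icc_of_le hT0]
    obtain ⟨C, hC⟩ : ∃ C, ∀ t ∈ Set.Icc (0:ℝ) T, ‖g i t‖ ≤ C := by
      obtain ⟨C, hC⟩ := (isCompact_Icc.image (hgc i)).isBounded.exists_norm_le
      exact ⟨C, fun t ht => hC _ (Set.mem_image_of_mem _ ht)⟩
    have hmem : MemLp (g i) ⊤ (MeasureTheory.volume.restrict (Set.Icc 0 T)) := by
      refine memLp_top_of_bound (hgc i).aestronglyMeasurable C ?_
      filter_upwards [ae_restrict_mem measurableSet_Icc] with t ht using hC t ht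
    exact hu.smul_of_top_left hmem
  -- the set of reachable displacements, as a submodule
  let V : Submodule ℝ (Fin n → ℝ) :=
    { carrier := {w | ∃ u : Fin m → ℝ → ℝ, (∀ i, IntegrableOn (u i) (Set.Icc 0 T)) ∧
        w = ∑ i, ∫ t in (0:ℝ)..T, u i t • g i t}
      zero_mem' := ⟨0, fun i => integrableOn_zero, by simp⟩
      add_mem' := by
        rintro a b ⟨u, hu, rfl⟩ ⟨u', hu', rfl⟩
        refine ⟨u + u', fun i => (hu i).add (hu' i), ?_⟩
        rw [← Finset.sum_add_distrib]
        refine Finset.sum_congr rfl fun i _ => ?_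
        rw [← intervalIntegral.integral_add (hint i (u i) (hu i)) (hint i (u' i) (hu' i))]
        congr 1; funext t; simp [add_smul]
      smul_mem' := by
        rintro c a ⟨u, hu, rfl⟩
        refine ⟨fun i t => c * u i t, fun i => (hu i).const_mul c, ?_⟩
        rw [Finset.smul_sum]
        refine Finset.sum_congr rfl fun i _ => ?_
        rw [← intervalIntegral.integral_smul]
        congr 1; funext t; rw [smul_smul] }
  have hVmem : ∀ w, w ∈ V ↔ ∃ u : Fin m → ℝ → ℝ,
      (∀ i, IntegrableOn (u i) (Set.Icc 0 T)) ∧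
      w = ∑ i, ∫ t in (0:ℝ)..T, u i t • g i t := fun w => Iff.rfl
  let L : (Fin n → ℝ) →ₗ[ℝ] (Fin n → ℝ) := Matrix.mulVecLin B
  -- averages of g over subintervals lie in V
  have havg : ∀ (i : Fin m) (a b : ℝ), 0 ≤ a → a < b → b ≤ T →
      (b - a)⁻¹ • (∫ t in a..b, g i t) ∈ V := by
    intro i a b h0 hab hbT
    classical
    refine (hVmem _).mpr ⟨fun j => if j = i then
      Set.indicator (Set.Ioc a b) (fun _ => (b - a)⁻¹) else 0, ?_, ?_⟩
    · intro j
      by_cases h : j = i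
      · simp only [h, if_pos rfl]
        exact (MeasureTheory.integrableOn_const (C := (b - a)⁻¹)
          measure_Icc_lt_top.ne).indicator measurableSet_Ioc
      · simp only [if_neg h]
        exact integrableOn_zero
    · rw [Finset.sum_eq_single i]
      · rw [show (fun j => if j = i then Set.indicator (Set.Ioc a b)
            (fun _ => (b - a)⁻¹) else (0 : ℝ → ℝ)) i
            = Set.indicator (Set.Ioc a b) (fun _ => (b - a)⁻¹) from if_pos rfl]
        exact (aux_integral_indicator_smul h0 hab.le hbT (g i) (b - a)⁻¹).symm
      · intro j _ hj
        rw [show (fun j => if j = i then Set.indicator (Set.Ioc a b)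
            (fun _ => (b - a)⁻¹) else (0 : ℝ → ℝ)) j = (0 : ℝ → ℝ) from if_neg hj]
        simp
      · intro h; exact absurd (Finset.mem_univ i) h
  -- each transported direction lies in V
  have hgV : ∀ (i : Fin m), ∀ t₀ ∈ Set.Icc (0:ℝ) T, g i t₀ ∈ V := by
    intro i t₀ ht₀
    have hVclosed : IsClosed (V : Set (Fin n → ℝ)) := Submodule.closed_of_finiteDimensional V
    rcases lt_or_eq_of_le ht₀.2 with ht₀T | ht₀T
    · -- t₀ < T : right limit
      have hder : HasDerivAt (fun s => ∫ t in t₀..s, g i t) (g i t₀) t₀ :=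
        intervalIntegral.integral_hasDerivAt_right
          (IntervalIntegrable.refl) ((hgc i).stronglyMeasurable.stronglyMeasurableAtFilter)
          (hgc i).continuousAt
      have hslope : Filter.Tendsto (slope (fun s => ∫ t in t₀..s, g i t) t₀)
          (nhdsWithin t₀ (Set.Ioc t₀ T)) (nhds (g i t₀)) :=
        (hasDerivAt_iff_tendsto_slope.mp hder).mono_left
          (nhdsWithin_mono t₀ (fun x hx => (Set.mem_compl_singleton_iff).mpr hx.1.ne'))
      haveI : (nhdsWithin t₀ (Set.Ioc t₀ T)).NeBot := left_nhdsWithin_Ioc_neBot ht₀T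
      refine hVclosed.mem_of_tendsto hslope ?_
      filter_upwards [self_mem_nhdsWithin] with s hs
      have : slope (fun s => ∫ t in t₀..s, g i t) t₀ s
          = (s - t₀)⁻¹ • (∫ t in t₀..s, g i t) := by
        rw [slope_def_module, intervalIntegral.integral_same, sub_zero]
      rw [this]
      exact havg i t₀ s ht₀.1 hs.1 hs.2
    · -- t₀ = T : left limit
      subst ht₀T
      have hder : HasDerivAt (fun s => ∫ t in t₀..s, g i t) (g i t₀) t₀ :=
        intervalIntegral.integral_hasDerivAt_right
          (IntervalIntegrable.refl) ((hgc i).stronglyMeasurable.stronglyMeasurableAtFilter)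
          (hgc i).continuousAt
      have hslope : Filter.Tendsto (slope (fun s => ∫ t in t₀..s, g i t) t₀)
          (nhdsWithin t₀ (Set.Ico 0 t₀)) (nhds (g i t₀)) :=
        (hasDerivAt_iff_tendsto_slope.mp hder).mono_left
          (nhdsWithin_mono t₀ (fun x hx => (Set.mem_compl_singleton_iff).mpr hx.2.ne))
      haveI : (nhdsWithin t₀ (Set.Ico 0 t₀)).NeBot := right_nhdsWithin_Ico_neBot hT
      refine hVclosed.mem_of_tendsto hslope ?_
      filter_upwards [self_mem_nhdsWithin] with s hs
      have : slope (fun s => ∫ t in t₀..s, g i t) t₀ s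
          = (t₀ - s)⁻¹ • (∫ t in s..t₀, g i t) := by
        rw [slope_def_module, intervalIntegral.integral_same, sub_zero,
          intervalIntegral.integral_symm, smul_neg, ← neg_smul, ← inv_neg, neg_sub]
      rw [this]
      exact havg i s t₀ hs.1 hs.2 le_rfl
  -- V equals the image of ST under B
  have hVST : V = Submodule.map L ST := by
    apply le_antisymm
    · rintro w ⟨u, hu, rfl⟩
      refine Submodule.sum_mem _ fun i _ => ?_
      refine aux_integral_mem _ hT0 (hint i (u i) (hu i)) fun t ht => ?_
      have hf : f i t ∈ ST := Submodule.subset_span ⟨i, t, ht, rfl⟩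
      have : u i t • g i t = L (u i t • f i t) := by
        rw [_root_.map_smul]; rw [hgf i t]; rfl
      rw [this]
      exact Submodule.mem_map_of_mem (Submodule.smul_mem _ _ hf)
    · rw [show ST = Submodule.span ℝ {w : Fin n → ℝ | ∃ i, ∃ t ∈ Set.Icc (0:ℝ) T, w = f i t}
        from rfl, Submodule.map_span, Submodule.span_le]
      rintro w ⟨x, ⟨i, t, ht, rfl⟩, rfl⟩
      have : L (f i t) = g i t := (hgf i t).symm
      rw [this]
      exact hgV i t ht
  have hVset : (V : Set (Fin n → ℝ)) = (fun z => B.mulVec z) '' (ST : Set (Fin n → ℝ)) := by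
    rw [hVST]
    rfl
  -- R is the affine image
  have hRV : R = (fun z => B.mulVec v0 + z) '' (V : Set (Fin n → ℝ)) := by
    ext w
    constructor
    · rintro ⟨u, hu, rfl⟩
      exact ⟨_, (hVmem _).mpr ⟨u, hu, rfl⟩, rfl⟩
    · rintro ⟨v, hv, rfl⟩
      obtain ⟨u, hu, rfl⟩ := (hVmem _).mp hv
      exact ⟨u, hu, rfl⟩
  have hmain : R = (fun z => B.mulVec v0 + B.mulVec z) '' (ST : Set (Fin n → ℝ)) := by
    rw [hRV, hVset, ← Set.image_comp]
    rfl
  refine ⟨hmain, ?_⟩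
  -- the affine map is bijective
  have hinj : Function.Injective (fun z => B.mulVec v0 + B.mulVec z) := by
    intro z z' h
    have h' : B.mulVec z = B.mulVec z' := by
      simpa using h
    have : (exp (-(T • A))).mulVec (B.mulVec z)
        = (exp (-(T • A))).mulVec (B.mulVec z') := by rw [h']
    rwa [Matrix.mulVec_mulVec, Matrix.mulVec_mulVec, hBinv, Matrix.one_mulVec,
      Matrix.one_mulVec] at this
  have hsurj : Function.Surjective (fun z => B.mulVec v0 + B.mulVec z) := by
    intro y
    refine ⟨(exp (-(T • A))).mulVec (y - B.mulVec v0), ?_⟩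
    simp only [Matrix.mulVec_mulVec, hBinv', Matrix.one_mulVec]
    abel
  constructor
  · intro hRuniv
    rw [Submodule.eq_top_iff']
    intro x
    rw [hmain] at hRuniv
    have hx : (fun z => B.mulVec v0 + B.mulVec z) x
        ∈ (fun z => B.mulVec v0 + B.mulVec z) '' (ST : Set (Fin n → ℝ)) := by
      rw [hRuniv]; trivial
    obtain ⟨y, hy, hyx⟩ := hx
    rwa [← hinj hyx]
  · intro hSTtop
    rw [hmain, hSTtop]
    simp only [Submodule.top_coe, Set.image_univ]
    exact Set.range_eq_univ.mpr hsurj
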